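/- Let γ = 1 + φ with φ ∼ N(0, σ²). Define the min-sum recursion X_l, Y_l on a (d_L,d_R)-regular tree with weight vector ω^{(ρ)} equal to some fixed ω̄ ∈ ℝ_+^s on the first s levels and constant ρ on levels s,…,T−1. Suppose min_{t ≥ 0} E[e^{−tX_s}] < ((d_R−1)·e^{−1/(2σ²)})^{−1/(d_L−2)}. Then there exist constants c < 1 and ρ ≥ 0 such that for every T > s, P(Σ_{i=1}^{d_L} X_{T−1}^{(i)} ≤ 0) ≤ ((d_R−1)·e^{−1/(2σ²)})^{−d_L/(d_L−2)} · c^{d_L·(d_L−1)^{T−s−1}}. -/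

import Mathlib

/-!
Write `L_l(t) = E[e^{-t X_l}]`. A minimum of `d_R - 1` copies is bounded by their sum, and the
Laplace transform of an independent sum is a product, so
`L_{l+1}(t) ≤ (d_R - 1) E[e^{-t ω_{l+1} γ}] L_l(t)^{d_L-1}`. Above level `s` the weight is `ρ`, and
`tρ = σ⁻²` makes the Gaussian factor `e^{-1/(2σ²)}`: then `L` is dominated by the iteration of
`L ↦ B L^{d_L-1}`, `B = (d_R - 1) e^{-1/(2σ²)}`, whose fixed point is `P = B^{-1/(d_L-2)}`, and
the ratio `L/P < 1` is raised to the power `d_L - 1` at every level. A Chernoff bound for the sum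
of the `d_L` independent messages finishes the proof.

If the hypothesis only holds at `t = 0`, that is `1 < P`, convexity of the Laplace transform and a
bound at `t = 1`, uniform in `ρ` since the first `s` weights do not involve it, give some `t > 0`
at which it still holds.
-/

open MeasureTheory ProbabilityTheory Real

/-- The min-sum recursion on a `(d_L, d_R)`-regular tree: `Y_0 = ω_0·γ`; for `0 ≤ l < T`,
`X_l` is the minimum of `d_R − 1` mutually independent copies of `Y_l`; and for `0 < l < T`,
`Y_l = ω_l·γ' + X_{l−1}^{(1)} + … + X_{l−1}^{(d_L−1)}` with a fresh copy `γ'` of `γ` and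
mutually independent copies of `X_{l−1}`, all mutually independent. -/
structure MinSumRecursion {Ω : Type*} [MeasurableSpace Ω] (μ : MeasureTheory.Measure Ω)
    (γ : Ω → ℝ) (ω : ℕ → ℝ) (dL dR T : ℕ) (X Y : ℕ → Ω → ℝ) : Prop where
  hY0 : IdentDistrib (Y 0) (fun o => ω 0 * γ o) μ μ
  hX : ∀ l < T, ∃ Z : Fin (dR - 1) → Ω → ℝ,
      iIndepFun Z μ ∧
      (∀ i, IdentDistrib (Z i) (Y l) μ μ) ∧
      ∀ o, X l o = sInf (Set.range fun i => Z i o)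
  hY : ∀ l, 0 < l → l < T → ∃ (g : Ω → ℝ) (Z : Fin (dL - 1) → Ω → ℝ),
      IdentDistrib g γ μ μ ∧
      (∀ i, IdentDistrib (Z i) (X (l - 1)) μ μ) ∧
      iIndepFun
        (fun o : Option (Fin (dL - 1)) => Option.elim o g Z) μ ∧
      ∀ o, Y l o = ω l * g o + ∑ i, Z i o

namespace ProbabilityTheory

variable {Ω ι : Type*} [MeasurableSpace Ω] {μ : Measure Ω}

lemma iIndepFun.integrable_exp_mul_sum₀ {X : ι → Ω → ℝ} (h_indep : iIndepFun X μ)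
    (h_meas : ∀ i, AEMeasurable (X i) μ) {s : Finset ι} {t : ℝ}
    (h_int : ∀ i ∈ s, Integrable (fun ω => exp (t * X i ω)) μ) :
    Integrable (fun ω => exp (t * (∑ i ∈ s, X i) ω)) μ := by
  have := h_indep.isProbabilityMeasure
  rw [← mgf_pos_iff, h_indep.mgf_sum₀ h_meas]
  exact Finset.prod_pos fun i hi => mgf_pos (h_int i hi)

lemma IdentDistrib.integrable_exp_mul_iff {X Y : Ω → ℝ} (h : IdentDistrib X Y μ μ) (t : ℝ) :
    Integrable (fun ω => exp (t * X ω)) μ ↔ Integrable (fun ω => exp (t * Y ω)) μ :=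
  (h.comp (measurable_const_mul t).exp).integrable_iff

lemma mgf_mul_le_chord [IsProbabilityMeasure μ] {X : Ω → ℝ} {u v : ℝ} (hu₀ : 0 ≤ u) (hu₁ : u ≤ 1)
    (h_int : Integrable (fun ω => exp (v * X ω)) μ) :
    mgf X μ (u * v) ≤ 1 - u + u * mgf X μ v := by
  have hpt : ∀ ω, exp (u * v * X ω) ≤ (1 - u) + u * exp (v * X ω) := fun ω => by
    have := convexOn_exp.2 (Set.mem_univ 0) (Set.mem_univ (v * X ω)) (sub_nonneg.2 hu₁) hu₀
      (by ring)
    simpa [mul_assoc] using this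
  calc mgf X μ (u * v) ≤ ∫ ω, (1 - u) + u * exp (v * X ω) ∂μ :=
        integral_mono_of_nonneg (ae_of_all _ fun ω => (exp_pos _).le)
          ((integrable_const _).add (h_int.const_mul u)) (ae_of_all _ hpt)
    _ = 1 - u + u * mgf X μ v := by
        rw [integral_add (integrable_const _) (h_int.const_mul u), integral_const, probReal_univ,
          one_smul, integral_const_mul, mgf]

lemma mgf_le_card_mul_of_eq_sInf [Fintype ι] [Nonempty ι] {Z : ι → Ω → ℝ} {X Y : Ω → ℝ}
    {t : ℝ} (hX : ∀ ω, X ω = sInf (Set.range fun i => Z i ω))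
    (hZ : ∀ i, IdentDistrib (Z i) Y μ μ) (h_int : Integrable (fun ω => exp (t * Y ω)) μ) :
    mgf X μ t ≤ Fintype.card ι * mgf Y μ t := by
  have hZ_int : ∀ i, Integrable (fun ω => exp (t * Z i ω)) μ := fun i =>
    ((hZ i).integrable_exp_mul_iff t).2 h_int
  have hpt : ∀ ω, exp (t * X ω) ≤ ∑ i, exp (t * Z i ω) := fun ω => by
    obtain ⟨i, hi⟩ := (Set.range_nonempty fun i => Z i ω).csInf_mem (Set.finite_range _)
    rw [hX ω, ← hi]
    exact Finset.single_le_sum (fun j _ => (exp_pos (t * Z j ω)).le) (Finset.mem_univ i)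
  calc mgf X μ t ≤ ∫ ω, ∑ i, exp (t * Z i ω) ∂μ :=
        integral_mono_of_nonneg (ae_of_all _ fun ω => (exp_pos _).le)
          (integrable_finsetSum _ fun i _ => hZ_int i) (ae_of_all _ hpt)
    _ = ∑ i, mgf (Z i) μ t := integral_finsetSum _ fun i _ => hZ_int i
    _ = Fintype.card ι * mgf Y μ t := by
        simp [mgf_congr_identDistrib (hZ _)]

lemma mgf_eq_mul_pow_of_eq_mul_add_sum [Fintype ι] {g : Ω → ℝ} {Z : ι → Ω → ℝ}
    {γ X Y : Ω → ℝ} {w : ℝ} (hind : iIndepFun (fun j : Option ι => Option.elim j g Z) μ)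
    (hg : IdentDistrib g γ μ μ) (hZ : ∀ i, IdentDistrib (Z i) X μ μ)
    (hY : ∀ ω, Y ω = w * g ω + ∑ i, Z i ω) (t : ℝ) :
    mgf Y μ t = mgf γ μ (w * t) * mgf X μ t ^ Fintype.card ι := by
  set V : Option ι → Ω → ℝ := fun j => Option.elim j (fun ω => w * g ω) Z
  have hV_indep : iIndepFun V μ := by
    convert hind.comp (fun j => Option.elim j (fun x => w * x) fun _ => id)
      (by rintro (_ | i); exacts [measurable_const_mul w, measurable_id]) using 1
    funext j; cases j <;> rfl
  have hV_meas : ∀ j, AEMeasurable (V j) μ := by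
    rintro (_ | i); exacts [hg.aemeasurable_fst.const_mul w, (hZ i).aemeasurable_fst]
  have hYV : Y = ∑ j, V j := by
    funext ω; simp [V, hY, Fintype.sum_option]
  rw [hYV, hV_indep.mgf_sum₀ hV_meas, Fintype.prod_option]
  simp [V, mgf_const_mul, mgf_congr_identDistrib hg, mgf_congr_identDistrib (hZ _)]

lemma iIndepFun.measureReal_sum_nonpos_le [Fintype ι] {S : ι → Ω → ℝ} {X : Ω → ℝ}
    (hind : iIndepFun S μ) (hS : ∀ i, IdentDistrib (S i) X μ μ) {t : ℝ} (ht : t ≤ 0)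
    (h_int : Integrable (fun ω => exp (t * X ω)) μ) :
    μ.real {ω | ∑ i, S i ω ≤ 0} ≤ mgf X μ t ^ Fintype.card ι := by
  have := hind.isProbabilityMeasure
  have hS_meas : ∀ i, AEMeasurable (S i) μ := fun i => (hS i).aemeasurable_fst
  have h := measure_le_le_exp_mul_mgf 0 ht (hind.integrable_exp_mul_sum₀ hS_meas
    (s := Finset.univ) fun i _ => ((hS i).integrable_exp_mul_iff t).2 h_int)
  simpa [hind.mgf_sum₀ hS_meas, mgf_congr_identDistrib (hS _)] using h

end ProbabilityTheory

lemma le_mul_div_pow_pow_of_le_mul_pow {L : ℕ → ℝ} {B P : ℝ} {m : ℕ} (hB : 0 ≤ B) (hP : 0 < P)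
    (hfix : B * P ^ m = P) (hL : ∀ n, 0 ≤ L n) (hstep : ∀ n, L (n + 1) ≤ B * L n ^ m) (k : ℕ) :
    L k ≤ P * (L 0 / P) ^ (m ^ k) := by
  induction k with
  | zero => rw [pow_zero, pow_one, mul_div_cancel₀ _ hP.ne']
  | succ k ih =>
    calc L (k + 1) ≤ B * L k ^ m := hstep k
      _ ≤ B * (P * (L 0 / P) ^ (m ^ k)) ^ m := by gcongr; exact hL k
      _ = B * P ^ m * (L 0 / P) ^ (m ^ (k + 1)) := by rw [mul_pow, ← pow_mul, pow_succ]; ring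
      _ = P * (L 0 / P) ^ (m ^ (k + 1)) := by rw [hfix]

lemma mul_rpow_neg_inv_sub_two_pow {B : ℝ} (hB : 0 < B) {n : ℕ} (hn : 2 < n) :
    B * (B ^ (-1 / ((n : ℝ) - 2))) ^ (n - 1) = B ^ (-1 / ((n : ℝ) - 2)) := by
  have hd : (n : ℝ) - 2 ≠ 0 := sub_ne_zero.2 (by exact_mod_cast hn.ne')
  rw [← rpow_natCast, ← rpow_mul hB.le, Nat.cast_sub (by omega), Nat.cast_one]
  nth_rewrite 1 [← rpow_one B]
  rw [← rpow_add hB]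
  congr 1
  field_simp
  ring

lemma rpow_neg_inv_sub_two_pow {B : ℝ} (hB : 0 < B) (n : ℕ) :
    (B ^ (-1 / ((n : ℝ) - 2))) ^ n = B ^ (-(n : ℝ) / ((n : ℝ) - 2)) := by
  rw [← rpow_natCast, ← rpow_mul hB.le]
  ring_nf

lemma integrable_exp_mul_of_map_eq_gaussianReal {Ω : Type*} [MeasurableSpace Ω] {μ : Measure Ω}
    [NeZero μ] {γ : Ω → ℝ} {m : ℝ} {v : NNReal} (hγ : μ.map γ = gaussianReal m v) (u : ℝ) :
    Integrable (fun o => exp (u * γ o)) μ := by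
  rw [← mgf_pos_iff, mgf_gaussianReal hγ]
  exact exp_pos _

lemma mgf_neg_inv_sq_of_map_eq_gaussianReal {Ω : Type*} [MeasurableSpace Ω] {μ : Measure Ω}
    {γ : Ω → ℝ} {σ : ℝ} (hσ : σ ≠ 0) (hγ : μ.map γ = gaussianReal 1 (σ ^ 2).toNNReal) :
    mgf γ μ (-(σ ^ 2)⁻¹) = exp (-1 / (2 * σ ^ 2)) := by
  rw [mgf_gaussianReal hγ, Real.coe_toNNReal _ (sq_nonneg σ)]
  congr 1
  field_simp
  ring

namespace MinSumRecursion

variable {Ω : Type*} [MeasurableSpace Ω] {μ : Measure Ω} {γ : Ω → ℝ} {ω : ℕ → ℝ} {dL dR T l : ℕ}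
  {X Y : ℕ → Ω → ℝ}

lemma mgf_X_le (h : MinSumRecursion μ γ ω dL dR T X Y) (hdR : 2 ≤ dR) (hlT : l < T) {t : ℝ}
    (h_int : Integrable (fun o => exp (t * Y l o)) μ) :
    mgf (X l) μ t ≤ ((dR : ℝ) - 1) * mgf (Y l) μ t := by
  obtain ⟨Z, -, hZ, hX⟩ := h.hX l hlT
  have : Nonempty (Fin (dR - 1)) := ⟨⟨0, by omega⟩⟩
  simpa [Nat.cast_sub (by omega : 1 ≤ dR)] using mgf_le_card_mul_of_eq_sInf hX hZ h_int

lemma mgf_Y_zero (h : MinSumRecursion μ γ ω dL dR T X Y) (t : ℝ) :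
    mgf (Y 0) μ t = mgf γ μ (ω 0 * t) := by
  rw [mgf_congr_identDistrib h.hY0, mgf_const_mul]

lemma mgf_Y_eq (h : MinSumRecursion μ γ ω dL dR T X Y) (hl : 0 < l) (hlT : l < T) (t : ℝ) :
    mgf (Y l) μ t = mgf γ μ (ω l * t) * mgf (X (l - 1)) μ t ^ (dL - 1) := by
  obtain ⟨g, Z, hg, hZ, hind, hY⟩ := h.hY l hl hlT
  simpa using mgf_eq_mul_pow_of_eq_mul_add_sum hind hg hZ hY t

variable [IsProbabilityMeasure μ]

lemma mgf_X_zero_le (h : MinSumRecursion μ γ ω dL dR T X Y) (hT : 0 < T) (hdR : 2 ≤ dR)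
    (hγ : ∀ u, Integrable (fun o => exp (u * γ o)) μ) (t : ℝ) :
    mgf (X 0) μ t ≤ ((dR : ℝ) - 1) * mgf γ μ (ω 0 * t) := by
  have hY_int : Integrable (fun o => exp (t * Y 0 o)) μ := by
    rw [← mgf_pos_iff, h.mgf_Y_zero]
    exact mgf_pos (hγ _)
  simpa only [h.mgf_Y_zero] using h.mgf_X_le hdR hT hY_int

lemma mgf_X_succ_le (h : MinSumRecursion μ γ ω dL dR T X Y) (hlT : l + 1 < T) (hdR : 2 ≤ dR)
    (hγ : ∀ u, Integrable (fun o => exp (u * γ o)) μ) {t : ℝ}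
    (hX : Integrable (fun o => exp (t * X l o)) μ) :
    mgf (X (l + 1)) μ t ≤
      ((dR : ℝ) - 1) * mgf γ μ (ω (l + 1) * t) * mgf (X l) μ t ^ (dL - 1) := by
  have hY := h.mgf_Y_eq (l := l + 1) (by omega) hlT t
  have hY_int : Integrable (fun o => exp (t * Y (l + 1) o)) μ := by
    rw [← mgf_pos_iff, hY]
    exact mul_pos (mgf_pos (hγ _)) (pow_pos (mgf_pos hX) _)
  calc mgf (X (l + 1)) μ t ≤ ((dR : ℝ) - 1) * mgf (Y (l + 1)) μ t := h.mgf_X_le hdR hlT hY_int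
    _ = _ := by rw [hY, Nat.add_sub_cancel, mul_assoc]

end MinSumRecursion

section WeightFamily

open Filter Topology

variable {Ω : Type*} [MeasurableSpace Ω] {μ : Measure Ω} [IsProbabilityMeasure μ]

lemma exists_forall_mgf_le {γ : Ω → ℝ} {dL dR s : ℕ} {ωbar : ℕ → ℝ} {X Y : ℝ → ℕ → Ω → ℝ}
    (hrec : ∀ ρ : ℝ, 0 ≤ ρ → ∀ T : ℕ,
      MinSumRecursion μ γ (fun l => if l ≤ s then ωbar l else ρ) dL dR T (X ρ) (Y ρ))
    (hdR : 2 ≤ dR) (hγ : ∀ u, Integrable (fun o => exp (u * γ o)) μ) {t : ℝ}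
    (hX : ∀ ρ l, Integrable (fun o => exp (t * X ρ l o)) μ) :
    ∀ l ≤ s, ∃ M, ∀ ρ : ℝ, 0 ≤ ρ → mgf (X ρ l) μ t ≤ M := by
  intro l hl
  induction l with
  | zero => exact ⟨_, fun ρ hρ => by simpa using (hrec ρ hρ 1).mgf_X_zero_le one_pos hdR hγ t⟩
  | succ l ih =>
    obtain ⟨M, hM⟩ := ih (by omega)
    refine ⟨((dR : ℝ) - 1) * mgf γ μ (ωbar (l + 1) * t) * M ^ (dL - 1), fun ρ hρ => ?_⟩
    have hstep := (hrec ρ hρ (l + 2)).mgf_X_succ_le (by omega) hdR hγ (hX ρ l)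
    rw [if_pos hl] at hstep
    have hdR' : (0 : ℝ) ≤ dR - 1 := by
      rw [sub_nonneg, Nat.one_le_cast]
      omega
    exact hstep.trans (mul_le_mul_of_nonneg_left (pow_le_pow_left₀ mgf_nonneg (hM ρ hρ) _)
      (mul_nonneg hdR' mgf_nonneg))

lemma exists_pos_forall_mgf_neg_lt {α : Type*} {F : α → Ω → ℝ} {A : Set α} {P M : ℝ}
    (h_int : ∀ a ∈ A, Integrable (fun o => exp (-1 * F a o)) μ)
    (hM : ∀ a ∈ A, mgf (F a) μ (-1) ≤ M) (h : ∃ t, 0 ≤ t ∧ ∀ a ∈ A, mgf (F a) μ (-t) < P) :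
    ∃ t, 0 < t ∧ ∀ a ∈ A, mgf (F a) μ (-t) < P := by
  obtain ⟨t, ht, hlt⟩ := h
  rcases ht.lt_or_eq with ht | rfl
  · exact ⟨t, ht, hlt⟩
  rcases le_or_gt P 1 with hP | hP
  · refine ⟨1, one_pos, fun a ha => absurd (hlt a ha) ?_⟩
    simpa using hP
  have hchord : ∀ᶠ u in 𝓝 (0 : ℝ), 1 - u + u * M < P ∧ u ≤ 1 := by
    have hcont : Continuous fun u : ℝ => 1 - u + u * M := by fun_prop
    exact (hcont.continuousAt.eventually_lt continuousAt_const (by simpa using hP)).and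
      (eventually_le_nhds one_pos)
  obtain ⟨u, ⟨hu, hu₁⟩, hu₀⟩ :=
    ((hchord.filter_mono nhdsWithin_le_nhds).and
      (eventually_mem_nhdsWithin (s := Set.Ioi 0))).exists
  refine ⟨u, hu₀, fun a ha => ?_⟩
  calc mgf (F a) μ (-u) = mgf (F a) μ (u * -1) := by rw [mul_neg_one]
    _ ≤ 1 - u + u * mgf (F a) μ (-1) := mgf_mul_le_chord (le_of_lt hu₀) hu₁ (h_int a ha)
    _ ≤ 1 - u + u * M := by gcongr; exacts [le_of_lt hu₀, hM a ha]
    _ < P := hu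

end WeightFamily

theorem improved_nonuniform_weight_bound_general
    {Ω : Type*} [MeasurableSpace Ω] (μ : MeasureTheory.Measure Ω) [IsProbabilityMeasure μ]
    (σ : ℝ) (hσ : 0 < σ) (dL dR : ℕ) (hdL : 2 < dL) (hdR : 2 < dR)
    (γ : Ω → ℝ)
    (hγ : μ.map γ = gaussianReal 1 (σ ^ 2).toNNReal)
    (s : ℕ) (ωbar : ℕ → ℝ)
    (X Y : ℝ → ℕ → Ω → ℝ)
    (hrec : ∀ ρ : ℝ, 0 ≤ ρ → ∀ T : ℕ,
      MinSumRecursion μ γ (fun l => if l ≤ s then ωbar l else ρ) dL dR T (X ρ) (Y ρ))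
    (hintX : ∀ (ρ : ℝ) (l : ℕ) (t : ℝ), 0 ≤ t → Integrable (fun o => exp (-t * X ρ l o)) μ)
    (hXs : ∃ t : ℝ, 0 ≤ t ∧ ∀ ρ : ℝ, 0 ≤ ρ →
      ∫ o, exp (-t * X ρ s o) ∂μ <
        (((dR : ℝ) - 1) * exp (-1 / (2 * σ ^ 2))) ^ (-(1 : ℝ) / ((dL : ℝ) - 2))) :
    ∃ c : ℝ, c < 1 ∧ ∃ ρ : ℝ, 0 ≤ ρ ∧ ∀ T : ℕ, s < T →
      ∀ S : Fin dL → Ω → ℝ,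
        iIndepFun S μ →
        (∀ i, IdentDistrib (S i) (X ρ (T - 1)) μ μ) →
        (μ {o | ∑ i, S i o ≤ 0}).toReal ≤
          (((dR : ℝ) - 1) * exp (-1 / (2 * σ ^ 2))) ^ (-(dL : ℝ) / ((dL : ℝ) - 2)) *
            c ^ (dL * (dL - 1) ^ (T - s - 1)) := by
  have hγ_int := integrable_exp_mul_of_map_eq_gaussianReal hγ
  obtain ⟨M, hM⟩ := exists_forall_mgf_le hrec hdR.le hγ_int (fun ρ l => hintX ρ l 1 zero_le_one)
    s le_rfl
  obtain ⟨t, ht, hs⟩ := exists_pos_forall_mgf_neg_lt (F := fun ρ => X ρ s) (A := Set.Ici 0)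
    (fun ρ _ => hintX ρ s 1 zero_le_one) hM hXs
  set B := ((dR : ℝ) - 1) * exp (-1 / (2 * σ ^ 2))
  have hB : 0 < B := mul_pos (by norm_num; omega) (exp_pos _)
  set P := B ^ (-1 / ((dL : ℝ) - 2))
  have hP : 0 < P := rpow_pos_of_pos hB _
  -- `tρ = σ⁻²` minimises `E[e^{-tργ}]`
  set ρ := (t * σ ^ 2)⁻¹
  have hρ : 0 ≤ ρ := by positivity
  have hstep : ∀ n, mgf (X ρ (s + n + 1)) μ (-t) ≤ B * mgf (X ρ (s + n)) μ (-t) ^ (dL - 1) :=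
    fun n => by
      have := (hrec ρ hρ (s + n + 2)).mgf_X_succ_le (l := s + n) (by omega) hdR.le hγ_int
        (hintX ρ _ t ht.le)
      rwa [if_neg (by omega), show ρ * -t = -(σ ^ 2)⁻¹ by simp only [ρ]; field_simp,
        mgf_neg_inv_sq_of_map_eq_gaussianReal hσ.ne' hγ] at this
  have hdecay := le_mul_div_pow_pow_of_le_mul_pow (L := fun n => mgf (X ρ (s + n)) μ (-t)) hB.le
    hP (mul_rpow_neg_inv_sub_two_pow hB hdL) (fun _ => mgf_nonneg) hstep
  refine ⟨mgf (X ρ s) μ (-t) / P, (div_lt_one hP).2 (hs ρ hρ), ρ, hρ, fun T hT S hS_ind hS => ?_⟩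
  have hT' : T - 1 = s + (T - s - 1) := by omega
  calc (μ {o | ∑ i, S i o ≤ 0}).toReal ≤ mgf (X ρ (T - 1)) μ (-t) ^ dL := by
        have := hS_ind.measureReal_sum_nonpos_le hS (neg_nonpos.2 ht.le) (hintX ρ _ t ht.le)
        rwa [Fintype.card_fin] at this
    _ ≤ (P * (mgf (X ρ s) μ (-t) / P) ^ ((dL - 1) ^ (T - s - 1))) ^ dL := by
        rw [hT']
        exact pow_le_pow_left₀ mgf_nonneg (by simpa using hdecay (T - s - 1)) _
    _ = _ := by rw [mul_pow, rpow_neg_inv_sub_two_pow hB, ← pow_mul, mul_comm _ dL]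

/-- Improved non-uniform-weight bound (AWGN channel): let `γ = 1 + φ`, `φ ∼ N(0,σ²)`, and for
each `ρ ≥ 0` let `X ρ, Y ρ` follow the min-sum recursion on a `(d_L,d_R)`-regular tree with
weights `ω̄` on the first levels and `ρ` thereafter. If
`min_{t≥0} E[e^{−tX_s}] < ((d_R−1)e^{−1/(2σ²)})^{−1/(d_L−2)}`, then there exist `c < 1` and
`ρ ≥ 0` such that for every `T > s`,
`P(Σ_{i=1}^{d_L} X_{T−1}^{(i)} ≤ 0) ≤ ((d_R−1)e^{−1/(2σ²)})^{−d_L/(d_L−2)} · c^{d_L(d_L−1)^{T−s−1}}`. -/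
theorem improved_nonuniform_weight_bound
    {Ω : Type*} [MeasurableSpace Ω] (μ : MeasureTheory.Measure Ω) [IsProbabilityMeasure μ]
    (σ : ℝ) (hσ : 0 < σ) (dL dR : ℕ) (hdL : 2 < dL) (hdR : 2 < dR)
    (γ : Ω → ℝ) (hmeasγ : Measurable γ)
    (hγ : μ.map γ = gaussianReal 1 (σ ^ 2).toNNReal)
    (s : ℕ) (ωbar : ℕ → ℝ) (hωbar : ∀ l, 0 ≤ ωbar l)
    (X Y : ℝ → ℕ → Ω → ℝ)
    (hrec : ∀ ρ : ℝ, 0 ≤ ρ → ∀ T : ℕ,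
      MinSumRecursion μ γ (fun l => if l ≤ s then ωbar l else ρ) dL dR T (X ρ) (Y ρ))
    (hmeasX : ∀ ρ l, Measurable (X ρ l)) (hmeasY : ∀ ρ l, Measurable (Y ρ l))
    (hintX : ∀ (ρ : ℝ) (l : ℕ) (t : ℝ), 0 ≤ t → Integrable (fun o => exp (-t * X ρ l o)) μ)
    (hXs : ∃ t : ℝ, 0 ≤ t ∧ ∀ ρ : ℝ, 0 ≤ ρ →
      ∫ o, exp (-t * X ρ s o) ∂μ <
        (((dR : ℝ) - 1) * exp (-1 / (2 * σ ^ 2))) ^ (-(1 : ℝ) / ((dL : ℝ) - 2))) :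
    ∃ c : ℝ, c < 1 ∧ ∃ ρ : ℝ, 0 ≤ ρ ∧ ∀ T : ℕ, s < T →
      ∀ S : Fin dL → Ω → ℝ,
        iIndepFun S μ →
        (∀ i, IdentDistrib (S i) (X ρ (T - 1)) μ μ) →
        (μ {o | ∑ i, S i o ≤ 0}).toReal ≤
          (((dR : ℝ) - 1) * exp (-1 / (2 * σ ^ 2))) ^ (-(dL : ℝ) / ((dL : ℝ) - 2)) *
            c ^ (dL * (dL - 1) ^ (T - s - 1)) :=
  improved_nonuniform_weight_bound_general μ σ hσ dL dR hdL hdR γ hγ s ωbar X Y hrec hintX hXs
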